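/- arXiv:2003.07499 — 4 statements merged into one kernel-verified Lean document; each statement's English description precedes it below -/
import Mathlib

section
/- For every integer k ≥ 1 and every antidiagonal k×k matrix S (i.e. S_{ij} = 0 unless j = k+1−i) with entries in a commutative ring, one has (S⊗S)·R_k(q) = R_k(q)^T·(S⊗S), where R_k(q) = Σ_{i,j} e_{ii}⊗e_{jj} + (q−1) Σ_i e_{ii}⊗e_{ii} + (q−q^{-1}) Σ_{j<i} e_{ij}⊗e_{ji} and T is full transposition. -/
/-!
The entry of `R = R_k(q)` at `((x, y), (c, d))` vanishes unless `{c, d} = {x, y}`, and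
`R (rev a, rev b) (c, d) = R (rev c, rev d) (a, b)`. For antidiagonal `S`, every row and every
column of `S ⊗ S` has a single possibly nonzero entry, so both sides at `((a, b), (c, d))` reduce
to one term: `S a (rev a) * S b (rev b) * R (rev a, rev b) (c, d)` and
`R (rev c, rev d) (a, b) * S (rev c) c * S (rev d) d`. On the support of `R` the two products of
entries of `S` coincide.
-/

open Matrix Kronecker

/-- The trigonometric `R`-matrix over a commutative ring, `q` an invertible scalar. -/
def Rmat (k : ℕ) {K : Type*} [CommRing K] (q : Kˣ) :
    Matrix (Fin k × Fin k) (Fin k × Fin k) K :=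
  (∑ i : Fin k, ∑ j : Fin k, single i i (1 : K) ⊗ₖ single j j (1 : K))
    + ((q : K) - 1) • (∑ i : Fin k, single i i (1 : K) ⊗ₖ single i i (1 : K))
    + ((q : K) - ((q⁻¹ : Kˣ) : K)) • (∑ i : Fin k, ∑ j : Fin k,
        if j < i then single i j (1 : K) ⊗ₖ single j i (1 : K) else 0)

namespace Matrix

section Support

variable {l m n α : Type*} [Fintype m] [NonUnitalNonAssocSemiring α]

theorem mul_apply_of_row_eq_zero {A : Matrix l m α} {i : l} {j : m}
    (hA : ∀ j', j' ≠ j → A i j' = 0) (M : Matrix m n α) (x : n) :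
    (A * M) i x = A i j * M j x := by
  rw [mul_apply, Fintype.sum_eq_single j fun j' hj' => by rw [hA j' hj', zero_mul]]

theorem mul_apply_of_col_eq_zero {A : Matrix m n α} {i : m} {j : n}
    (hA : ∀ i', i' ≠ i → A i' j = 0) (M : Matrix l m α) (x : l) :
    (M * A) x j = M x i * A i j := by
  rw [mul_apply, Fintype.sum_eq_single i fun i' hi' => by rw [hA i' hi', mul_zero]]

end Support

section Kronecker

variable {l m n o α : Type*} [MulZeroClass α] {A : Matrix l m α} {B : Matrix n o α}

theorem kronecker_row_eq_zero_of_ne {i : l} {i' : n} {j : m} {j' : o}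
    (hA : ∀ x, x ≠ j → A i x = 0) (hB : ∀ y, y ≠ j' → B i' y = 0) :
    ∀ p, p ≠ (j, j') → (A ⊗ₖ B) (i, i') p = 0 := by
  rintro ⟨x, y⟩ hxy
  rw [kroneckerMap_apply]
  by_cases hx : x = j
  · rw [hB y fun hy => hxy (by rw [hx, hy]), mul_zero]
  · rw [hA x hx, zero_mul]

theorem kronecker_col_eq_zero_of_ne {i : l} {i' : n} {j : m} {j' : o}
    (hA : ∀ x, x ≠ i → A x j = 0) (hB : ∀ y, y ≠ i' → B y j' = 0) :
    ∀ p, p ≠ (i, i') → (A ⊗ₖ B) p (j, j') = 0 :=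
  kronecker_row_eq_zero_of_ne (A := Aᵀ) (B := Bᵀ) hA hB

end Kronecker

section SingleKroneckerSingle

variable {n α : Type*} [Fintype n] [DecidableEq n] [Semiring α]

theorem sum_sum_single_kronecker_single_one :
    ∑ i : n, ∑ j : n, single i i (1 : α) ⊗ₖ single j j (1 : α) = 1 := by
  simp only [single_kronecker_single, mul_one, ← Fintype.sum_prod_type', Prod.mk.eta,
    sum_single_one]

theorem sum_single_kronecker_single_same_apply (x y c d : n) :
    (∑ i : n, single i i (1 : α) ⊗ₖ single i i (1 : α)) (x, y) (c, d) =
      if x = y ∧ x = c ∧ x = d then 1 else 0 := by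
  simp only [sum_apply, single_kronecker_single]
  rw [Fintype.sum_eq_single x] <;> simp +contextual [single, eq_comm]

theorem sum_sum_lt_single_kronecker_single_apply [LinearOrder n] (x y c d : n) :
    (∑ i : n, ∑ j : n, if j < i then single i j (1 : α) ⊗ₖ single j i (1 : α) else 0)
        (x, y) (c, d) =
      if y < x ∧ y = c ∧ x = d then 1 else 0 := by
  simp only [sum_apply, Matrix.ite_apply, single_kronecker_single, zero_apply]
  rw [Fintype.sum_eq_single x, Fintype.sum_eq_single y] <;> simp +contextual [single, eq_comm]
  grind

end SingleKroneckerSingle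

end Matrix

namespace Rmat

variable {k : ℕ} {K : Type*} [CommRing K] (q : Kˣ)

theorem apply (x y c d : Fin k) :
    Rmat k q (x, y) (c, d) =
      (if x = c ∧ y = d then 1 else 0)
      + ((q : K) - 1) * (if x = y ∧ x = c ∧ x = d then 1 else 0)
      + ((q : K) - ((q⁻¹ : Kˣ) : K)) * (if y < x ∧ y = c ∧ x = d then 1 else 0) := by
  simp only [Rmat, sum_sum_single_kronecker_single_one, Matrix.add_apply, Matrix.smul_apply, smul_eq_mul,
    Matrix.one_apply, Prod.mk.injEq, sum_single_kronecker_single_same_apply,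
    sum_sum_lt_single_kronecker_single_apply]

theorem apply_eq_zero {x y c d : Fin k} (h : ¬((x = c ∧ y = d) ∨ (x = d ∧ y = c))) :
    Rmat k q (x, y) (c, d) = 0 := by
  rw [apply, if_neg (by tauto), if_neg (by grind), if_neg (by grind)]
  ring

theorem apply_rev_rev (a b c d : Fin k) :
    Rmat k q (a.rev, b.rev) (c, d) = Rmat k q (c.rev, d.rev) (a, b) := by
  have h₁ : a.rev = c ∧ b.rev = d ↔ c.rev = a ∧ d.rev = b := by
    simp only [Fin.ext_iff, Fin.val_rev]; omega
  have h₂ : a.rev = b.rev ∧ a.rev = c ∧ a.rev = d ↔ c.rev = d.rev ∧ c.rev = a ∧ c.rev = b := by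
    simp only [Fin.ext_iff, Fin.val_rev]; omega
  have h₃ : b.rev < a.rev ∧ b.rev = c ∧ a.rev = d ↔ d.rev < c.rev ∧ d.rev = a ∧ c.rev = b := by
    simp only [Fin.ext_iff, Fin.lt_def, Fin.val_rev]; omega
  simp only [apply, h₁, h₂, h₃]

end Rmat

theorem kronecker_antidiag_Rmat_general (k : ℕ) {K : Type*} [CommRing K] (q : Kˣ)
    (S : Matrix (Fin k) (Fin k) K) (hS : ∀ i j : Fin k, j ≠ i.rev → S i j = 0) :
    (S ⊗ₖ S) * Rmat k q = (Rmat k q)ᵀ * (S ⊗ₖ S) := by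
  have hcol : ∀ j i : Fin k, i ≠ j.rev → S i j = 0 := fun j i h =>
    hS i j fun h' => h (by rw [h', Fin.rev_rev])
  ext ⟨a, b⟩ ⟨c, d⟩
  rw [mul_apply_of_row_eq_zero (kronecker_row_eq_zero_of_ne (hS a) (hS b)),
    mul_apply_of_col_eq_zero (kronecker_col_eq_zero_of_ne (hcol c) (hcol d)),
    transpose_apply, kroneckerMap_apply, kroneckerMap_apply, Rmat.apply_rev_rev]
  by_cases h : (c.rev = a ∧ d.rev = b) ∨ (c.rev = b ∧ d.rev = a)
  · rcases h with ⟨rfl, rfl⟩ | ⟨rfl, rfl⟩ <;> simp only [Fin.rev_rev] <;> ring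
  · rw [Rmat.apply_eq_zero q h, mul_zero, zero_mul]

/-- for every antidiagonal `k×k` matrix `S` (i.e. `S i j = 0` unless
`j = k+1−i`, in `Fin k` terms `j = i.rev`), one has `(S⊗S)·R_k(q) = R_k(q)ᵀ·(S⊗S)`. -/
theorem kronecker_antidiag_Rmat (k : ℕ) (hk : 1 ≤ k) {K : Type*} [CommRing K] (q : Kˣ)
    (S : Matrix (Fin k) (Fin k) K) (hS : ∀ i j : Fin k, j ≠ i.rev → S i j = 0) :
    (S ⊗ₖ S) * Rmat k q = (Rmat k q)ᵀ * (S ⊗ₖ S) :=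
  kronecker_antidiag_Rmat_general k q S hS
end

section
/- For every n ≥ 1, the n×n integer matrix M with entries M_{ij} = (−1)^{i+1}·C(n−i, j) (binomial coefficient, 1 ≤ i, j ≤ n, with C(m,k)=0 for k>m) satisfies M³ = (−1)^{n+1}·Id. -/
open Matrix Polynomial Finset

lemma poly_key1 (a b : ℕ) (hab : a ≤ b) :
    ∑ j ∈ Finset.range (b+1), C ((-1:ℤ)^j * (a.choose j : ℤ)) * (X + 1) ^ (b - j)
      = (X + 1) ^ (b - a) * X ^ a := by
  rw [← Finset.sum_subset (Finset.range_subset_range.2 (by omega : a + 1 ≤ b + 1))]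
  · have step : ∀ j ∈ Finset.range (a+1),
        C ((-1:ℤ)^j * (a.choose j : ℤ)) * (X + 1) ^ (b - j)
        = (X + 1) ^ (b - a) * ((X+1:ℤ[X]) ^ (a - j) * (-1:ℤ[X]) ^ (a - (a - j)) * ((a.choose (a - j) : ℕ) : ℤ[X])) := by
      intro j hj
      rw [Finset.mem_range] at hj
      have hja : j ≤ a := by omega
      have h1 : a - (a - j) = j := by omega
      have h2 : b - j = (b - a) + (a - j) := by omega
      rw [h1, h2, pow_add]
      have h3 : a.choose (a - j) = a.choose j := Nat.choose_symm hja
      rw [h3]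
      simp only [Polynomial.C_mul, Polynomial.C_pow, Polynomial.C_neg, Polynomial.C_1, Polynomial.C_eq_natCast]
      ring
    rw [Finset.sum_congr rfl step, ← Finset.mul_sum]
    congr 1
    have hrefl := Finset.sum_range_reflect
      (fun j => (X+1:ℤ[X]) ^ j * (-1:ℤ[X]) ^ (a - j) * ((a.choose j : ℕ) : ℤ[X])) (a+1)
    simp only [Nat.add_sub_cancel] at hrefl
    have hxa := add_pow (X+1 : ℤ[X]) (-1) a
    simp only [add_neg_cancel_right] at hxa
    rw [hrefl]
    exact hxa.symm
  · intro j hj hja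
    rw [Finset.mem_range] at hj
    rw [Finset.mem_range] at hja
    have : a.choose j = 0 := Nat.choose_eq_zero_of_lt (by omega)
    simp [this]

lemma key1 (a b k : ℕ) (hab : a ≤ b) (hk : k ≤ b) :
    ∑ j ∈ Finset.range (b+1), (-1:ℤ)^j * (a.choose j : ℤ) * ((b-j).choose k : ℤ)
      = ((b-a).choose (b-k) : ℤ) := by
  have h := congrArg (fun p : ℤ[X] => p.coeff k) (poly_key1 a b hab)
  simp only [Polynomial.finset_sum_coeff, Polynomial.coeff_C_mul,
    Polynomial.coeff_X_add_one_pow, Polynomial.coeff_mul_X_pow'] at h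
  rw [h]
  by_cases hka : a ≤ k
  · rw [if_pos hka]
    have h1 : b - k = (b-a) - (k-a) := by omega
    rw [h1, Nat.choose_symm (by omega : k - a ≤ b - a)]
  · rw [if_neg hka]
    have : (b-a).choose (b-k) = 0 := Nat.choose_eq_zero_of_lt (by omega)
    rw [this]
    simp

lemma poly_key2 (i n : ℕ) (hi : i < n) :
    ∑ m ∈ Finset.range n, C ((-1:ℤ)^m * (i.choose m : ℤ)) * (X + 1) ^ m
      = C ((-1:ℤ)^i) * X ^ i := by
  rw [← Finset.sum_subset (Finset.range_subset_range.2 (by omega : i + 1 ≤ n))]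
  · have step : ∀ m ∈ Finset.range (i+1),
        C ((-1:ℤ)^m * (i.choose m : ℤ)) * (X + 1) ^ m
        = C ((-1:ℤ)^i) * ((X+1:ℤ[X]) ^ m * (-1:ℤ[X]) ^ (i - m) * ((i.choose m : ℕ) : ℤ[X])) := by
      intro m hm
      rw [Finset.mem_range] at hm
      have hmi : m ≤ i := by omega
      have hsgn : (-1:ℤ)^m = (-1)^i * (-1)^(i-m) := by
        rw [← pow_add]
        have : i + (i - m) = m + 2*(i-m) := by omega
        rw [this, pow_add, pow_mul]
        simp
      rw [hsgn]
      simp only [Polynomial.C_mul, Polynomial.C_pow, Polynomial.C_neg, Polynomial.C_1, Polynomial.C_eq_natCast]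
      ring
    rw [Finset.sum_congr rfl step, ← Finset.mul_sum]
    congr 1
    have hxi := add_pow (X+1 : ℤ[X]) (-1) i
    simp only [add_neg_cancel_right] at hxi
    exact hxi.symm
  · intro m hm hmi
    rw [Finset.mem_range] at hm
    rw [Finset.mem_range] at hmi
    have : i.choose m = 0 := Nat.choose_eq_zero_of_lt (by omega)
    simp [this]

lemma key2 (i l n : ℕ) (hi : i < n) :
    ∑ m ∈ Finset.range n, (-1:ℤ)^m * (i.choose m : ℤ) * (m.choose l : ℤ)
      = (-1:ℤ)^i * (if i = l then 1 else 0) := by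
  have h := congrArg (fun p : ℤ[X] => p.coeff l) (poly_key2 i n hi)
  simp only [Polynomial.finset_sum_coeff, Polynomial.coeff_C_mul,
    Polynomial.coeff_X_add_one_pow, Polynomial.coeff_X_pow] at h
  rw [h]
  congr 1
  simp [eq_comm]


/-- The toy-example transport matrix `M₁` of the `SL_n` triangle with all cluster
variables set to `1`: in 1-based indices `1 ≤ i, j ≤ n`, its `(i,j)` entry is
`(−1)^{i+1}·C(n−i, j)` (with the column binomial index starting at `0`, as in the
explicit matrices of the paper). -/
def toyM (n : ℕ) : Matrix (Fin n) (Fin n) ℤ :=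
  Matrix.of fun i j => (-1 : ℤ) ^ (i : ℕ) * ((n - 1 - (i : ℕ)).choose (j : ℕ) : ℤ)

/-- `M³ = (−1)^{n+1}·Id`. -/
theorem toyM_cube (n : ℕ) (hn : 1 ≤ n) :
    toyM n ^ 3 = ((-1 : ℤ) ^ (n + 1)) • (1 : Matrix (Fin n) (Fin n) ℤ) := by
  have hb : n - 1 + 1 = n := by omega
  have inner : ∀ i k : Fin n, ∑ j : Fin n, toyM n i j * toyM n j k
      = (-1:ℤ)^(i:ℕ) * ((i:ℕ).choose (n-1-(k:ℕ)) : ℤ) := by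
    intro i k
    have hrw : ∀ j : Fin n, toyM n i j * toyM n j k
        = (fun j : ℕ => (-1:ℤ)^(i:ℕ) * ((-1:ℤ)^j * ((n-1-(i:ℕ)).choose j : ℤ) * ((n-1-j).choose (k:ℕ) : ℤ))) (j : ℕ) := by
      intro j
      simp only [toyM, Matrix.of_apply]
      ring
    rw [Finset.sum_congr rfl (fun j _ => hrw j),
      Fin.sum_univ_eq_sum_range (fun j : ℕ => (-1:ℤ)^(i:ℕ) * ((-1:ℤ)^j * ((n-1-(i:ℕ)).choose j : ℤ) * ((n-1-j).choose (k:ℕ) : ℤ))) n,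
      ← Finset.mul_sum]
    congr 1
    have hk1 := key1 (n-1-(i:ℕ)) (n-1) (k:ℕ) (by omega) (by have := k.isLt; omega)
    rw [hb] at hk1
    rw [hk1]
    congr 2
    have := i.isLt; omega
  ext i l
  rw [pow_succ, pow_succ, pow_one, Matrix.mul_apply]
  simp only [Matrix.mul_apply]
  have hout : ∀ k : Fin n, (∑ j : Fin n, toyM n i j * toyM n j k) * toyM n k l
      = (fun k : ℕ => (-1:ℤ)^(i:ℕ) * ((i:ℕ).choose (n-1-k) : ℤ) * ((-1:ℤ)^k * ((n-1-k).choose (l:ℕ) : ℤ))) (k:ℕ) := by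
    intro k
    rw [inner i k]
    simp only [toyM, Matrix.of_apply]
  rw [Finset.sum_congr rfl (fun k _ => hout k),
    Fin.sum_univ_eq_sum_range (fun k : ℕ => (-1:ℤ)^(i:ℕ) * ((i:ℕ).choose (n-1-k) : ℤ) * ((-1:ℤ)^k * ((n-1-k).choose (l:ℕ) : ℤ))) n]
  have hrefl := Finset.sum_range_reflect
    (fun m : ℕ => (-1:ℤ)^(i:ℕ) * ((i:ℕ).choose m : ℤ) * ((-1:ℤ)^(n-1-m) * ((m).choose (l:ℕ) : ℤ))) n
  have hcongr : ∀ k ∈ Finset.range n,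
      (-1:ℤ)^(i:ℕ) * ((i:ℕ).choose (n-1-k) : ℤ) * ((-1:ℤ)^k * ((n-1-k).choose (l:ℕ) : ℤ))
      = (-1:ℤ)^(i:ℕ) * ((i:ℕ).choose (n-1-k) : ℤ) * ((-1:ℤ)^(n-1-(n-1-k)) * ((n-1-k).choose (l:ℕ) : ℤ)) := by
    intro k hk
    rw [Finset.mem_range] at hk
    congr 3
    omega
  rw [Finset.sum_congr rfl hcongr, hrefl]
  have hsum : ∀ m ∈ Finset.range n,
      (-1:ℤ)^(i:ℕ) * ((i:ℕ).choose m : ℤ) * ((-1:ℤ)^(n-1-m) * ((m).choose (l:ℕ) : ℤ))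
      = ((-1:ℤ)^(n-1) * (-1:ℤ)^(i:ℕ)) * ((-1:ℤ)^m * ((i:ℕ).choose m : ℤ) * ((m).choose (l:ℕ) : ℤ)) := by
    intro m hm
    rw [Finset.mem_range] at hm
    have hsgn : (-1:ℤ)^(n-1-m) = (-1)^(n-1) * (-1)^m := by
      rw [← pow_add]
      have : n - 1 + m = (n-1-m) + 2*m := by omega
      rw [this, pow_add, pow_mul]
      simp
    rw [hsgn]; ring
  rw [Finset.sum_congr rfl hsum, ← Finset.mul_sum,
    key2 (i:ℕ) (l:ℕ) n i.isLt]
  have hsgn2 : (-1:ℤ)^(n+1) = (-1)^(n-1) := by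
    have : n + 1 = (n-1) + 2 := by omega
    rw [this, pow_add]
    simp
  rw [Matrix.smul_apply, Matrix.one_apply, hsgn2, smul_eq_mul]
  have hdelta : (if (i:ℕ) = (l:ℕ) then (1:ℤ) else 0) = (if i = l then 1 else 0) := by
    simp [Fin.ext_iff]
  rw [show ((-1:ℤ)^(n-1) * (-1)^(i:ℕ)) * ((-1:ℤ)^(i:ℕ) * (if (i:ℕ) = (l:ℕ) then (1:ℤ) else 0)) = (-1:ℤ)^(n-1) * (((-1:ℤ)^(i:ℕ))^2 * (if (i:ℕ) = (l:ℕ) then (1:ℤ) else 0)) by ring]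
  rw [hdelta]
  have hsq : ((-1:ℤ)^(i:ℕ))^2 = 1 := by
    rw [← pow_mul, mul_comm, pow_mul]; simp
  simp [hsq]
end

section
/- For every n ≥ 1, let M₁ be the n×n matrix with (M₁)_{ij} = (−1)^{i+1}·C(n−i, j) and M₂ = M₁². Then the matrix A = M₁ᵀ·M₂ is upper triangular with entries A_{ij} = C(n, j−i) for i ≤ j (in particular A_{ii} = 1) and A_{ij} = 0 for i > j. -/
open Matrix Finset

/-- Hockey stick in `range` form. -/
lemma aux_sum_range_choose (N a : ℕ) :
    ∑ k ∈ range (N + 1), k.choose a = (N + 1).choose (a + 1) := by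
  rw [← Nat.sum_Icc_choose]
  symm
  apply Finset.sum_subset
  · intro x hx
    simp only [Finset.mem_Icc, Finset.mem_range] at *
    omega
  · intro x hx hnx
    simp only [Finset.mem_Icc, Finset.mem_range] at *
    exact Nat.choose_eq_zero_of_lt (by omega)

/-- Vandermonde-type identity `∑_{k≤m} C(m-k,a)·C(k,b) = C(m+1,a+b+1)`. -/
lemma aux_sumC : ∀ (m b a : ℕ),
    ∑ k ∈ range (m + 1), (m - k).choose a * k.choose b = (m + 1).choose (a + b + 1) := by
  intro m
  induction m with
  | zero => intro b a; cases a <;> cases b <;> simp [Nat.choose]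
  | succ m ih =>
    intro b a
    cases b with
    | zero =>
      simp only [Nat.choose_zero_right, mul_one, Nat.add_zero]
      have h1 : ∑ k ∈ range (m + 1 + 1), (m + 1 - k).choose a
          = ∑ k ∈ range (m + 1 + 1), k.choose a := by
        rw [← Finset.sum_range_reflect (fun k => k.choose a)]
        apply Finset.sum_congr rfl
        intro k hk
        simp only [Finset.mem_range] at hk
        congr 1
      rw [h1, aux_sum_range_choose]
    | succ b =>
      rw [Finset.sum_range_succ']
      have h2 : ∀ l, (m + 1 - (l + 1)).choose a * (l + 1).choose (b + 1)
          = (m - l).choose a * l.choose b + (m - l).choose a * l.choose (b + 1) := by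
        intro l
        rw [Nat.succ_sub_succ, Nat.choose_succ_succ, Nat.mul_add]
      simp only [h2, Finset.sum_add_distrib, Nat.choose_succ_succ (b + 1),
        Nat.choose_zero_right, Nat.choose_eq_zero_of_lt (Nat.succ_pos b), mul_zero, add_zero]
      rw [ih b a, ih (b + 1) a]
      have : a + (b + 1) + 1 = (a + b + 1) + 1 := by ring
      rw [this, Nat.choose_succ_succ (m + 1) (a + b + 1)]

/-- Alternating identity `∑_k (-1)^k C(a,k) C(m-k,j) = C(m-a, m-j)` for `a ≤ m`. -/
lemma aux_sumB : ∀ (a m j : ℕ), a ≤ m →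
    ∑ k ∈ range (m + 1), (-1 : ℤ) ^ k * (a.choose k) * ((m - k).choose j)
      = if j ≤ m then ((m - a).choose (m - j) : ℤ) else 0 := by
  intro a
  induction a with
  | zero =>
    intro m j _
    rw [Finset.sum_eq_single 0]
    · simp only [pow_zero, Nat.choose_zero_right, Nat.cast_one, one_mul, Nat.sub_zero,
        Nat.zero_eq, Nat.sub_zero]
      split_ifs with h
      · rw [Nat.choose_symm h]
      · rw [Nat.choose_eq_zero_of_lt (by omega)]; simp
    · intro k _ hk
      rw [Nat.choose_eq_zero_of_lt (Nat.pos_of_ne_zero hk)]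
      simp
    · intro h
      exact absurd (Finset.mem_range.mpr (Nat.succ_pos m)) h
  | succ a ih =>
    intro m j ham
    obtain ⟨m', rfl⟩ : ∃ m', m = m' + 1 := ⟨m - 1, by omega⟩
    have ham' : a ≤ m' := by omega
    have ham'' : a ≤ m' + 1 := by omega
    -- key: S(a+1, m'+1) = S(a, m'+1) - S(a, m')
    have key : ∑ k ∈ range (m' + 1 + 1), (-1 : ℤ) ^ k * ((a + 1).choose k) * ((m' + 1 - k).choose j)
        = (∑ k ∈ range (m' + 1 + 1), (-1 : ℤ) ^ k * (a.choose k) * ((m' + 1 - k).choose j))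
          - (∑ k ∈ range (m' + 1), (-1 : ℤ) ^ k * (a.choose k) * ((m' - k).choose j)) := by
      rw [Finset.sum_range_succ' (fun k => (-1 : ℤ) ^ k * ((a + 1).choose k) * ((m' + 1 - k).choose j)),
        Finset.sum_range_succ' (fun k => (-1 : ℤ) ^ k * (a.choose k) * ((m' + 1 - k).choose j))]
      have h3 : ∀ l, (-1 : ℤ) ^ (l + 1) * ((a + 1).choose (l + 1)) * ((m' + 1 - (l + 1)).choose j)
          = (-1 : ℤ) ^ (l + 1) * (a.choose (l + 1)) * ((m' + 1 - (l + 1)).choose j)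
            - (-1 : ℤ) ^ l * (a.choose l) * ((m' - l).choose j) := by
        intro l
        rw [Nat.succ_sub_succ, Nat.choose_succ_succ a l, pow_succ]
        push_cast
        ring
      simp only [h3, Finset.sum_sub_distrib]
      simp only [pow_zero, Nat.choose_zero_right, Nat.cast_one, one_mul, Nat.sub_zero]
      ring
    rw [key, ih (m' + 1) j ham'', ih m' j ham']
    have hsub1 : m' + 1 - a = (m' - a) + 1 := by omega
    split_ifs with h1 h2 h2
    · -- j ≤ m' + 1 and j ≤ m'
      have hsub2 : m' + 1 - j = (m' - j) + 1 := by omega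
      rw [hsub1, hsub2, Nat.choose_succ_succ (m' - a) (m' - j)]
      have : m' + 1 - (a + 1) = m' - a := by omega
      rw [this]
      push_cast
      ring
    · -- j = m' + 1
      have hj : j = m' + 1 := by omega
      have : m' + 1 - j = 0 := by omega
      rw [this]
      have : m' + 1 - (a + 1) = m' - a := by omega
      rw [this, hsub1]
      simp
    · omega
    · simp

lemma toyM_sq (n : ℕ) (i j : Fin n) :
    (toyM n ^ 2) i j = (-1 : ℤ) ^ (i : ℕ) * ((i : ℕ).choose (n - 1 - (j : ℕ)) : ℤ) := by
  have hn : 1 ≤ n := Nat.pos_of_ne_zero (fun h => by subst h; exact i.elim0)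
  obtain ⟨m, rfl⟩ : ∃ m, n = m + 1 := ⟨n - 1, by omega⟩
  have hi : (i : ℕ) ≤ m := by omega
  have hj : (j : ℕ) ≤ m := by omega
  rw [pow_two, Matrix.mul_apply]
  simp only [toyM, Matrix.of_apply]
  have : ∀ k : Fin (m + 1),
      ((-1 : ℤ) ^ (i : ℕ) * ((m + 1 - 1 - (i : ℕ)).choose (k : ℕ) : ℤ)) *
        ((-1 : ℤ) ^ (k : ℕ) * ((m + 1 - 1 - (k : ℕ)).choose (j : ℕ) : ℤ))
      = (-1 : ℤ) ^ (i : ℕ) *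
          ((-1 : ℤ) ^ (k : ℕ) * ((m - (i : ℕ)).choose (k : ℕ) : ℤ) * ((m - (k : ℕ)).choose (j : ℕ) : ℤ)) := by
    intro k
    simp only [Nat.add_sub_cancel]
    ring
  rw [Finset.sum_congr rfl (fun k _ => this k), ← Finset.mul_sum]
  rw [Fin.sum_univ_eq_sum_range (fun k => (-1 : ℤ) ^ k * ((m - (i : ℕ)).choose k : ℤ) * ((m - k).choose (j : ℕ) : ℤ))]
  rw [aux_sumB (m - (i : ℕ)) m (j : ℕ) (Nat.sub_le m _)]
  rw [if_pos hj]
  have e1 : m - (m - (i : ℕ)) = (i : ℕ) := by omega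
  have e2 : m + 1 - 1 - (j : ℕ) = m - (j : ℕ) := by omega
  rw [e1, e2]

/-- with `M₂ = M₁²`, the matrix `A = M₁ᵀ·M₂` is upper triangular with
`A_{ij} = C(n, j−i)` for `i ≤ j` (in particular `A_{ii} = 1`) and `A_{ij} = 0` for
`i > j`. -/
theorem toyA_entries (n : ℕ) (hn : 1 ≤ n) :
    ∀ i j : Fin n,
      ((toyM n)ᵀ * (toyM n ^ 2)) i j
        = if (i : ℕ) ≤ (j : ℕ) then (n.choose ((j : ℕ) - (i : ℕ)) : ℤ) else 0 := by
  intro i j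
  obtain ⟨m, rfl⟩ : ∃ m, n = m + 1 := ⟨n - 1, by omega⟩
  have hi : (i : ℕ) ≤ m := by omega
  have hj : (j : ℕ) ≤ m := by omega
  rw [Matrix.mul_apply]
  have step : ∀ k : Fin (m + 1),
      (toyM (m + 1))ᵀ i k * (toyM (m + 1) ^ 2) k j
        = (((m - (k : ℕ)).choose (i : ℕ) * (k : ℕ).choose (m - (j : ℕ)) : ℕ) : ℤ) := by
    intro k
    rw [Matrix.transpose_apply, toyM_sq]
    simp only [toyM, Matrix.of_apply, Nat.add_sub_cancel]
    push_cast
    rw [show ((-1 : ℤ) ^ (k : ℕ) * ((m - (k : ℕ)).choose (i : ℕ) : ℤ)) *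
        ((-1 : ℤ) ^ (k : ℕ) * ((k : ℕ).choose (m - (j : ℕ)) : ℤ))
        = ((-1 : ℤ) ^ (k : ℕ)) ^ 2 * (((m - (k : ℕ)).choose (i : ℕ) : ℤ) * ((k : ℕ).choose (m - (j : ℕ)) : ℤ)) by ring]
    rw [← pow_mul, pow_mul']
    simp
  rw [Finset.sum_congr rfl (fun k _ => step k), ← Nat.cast_sum]
  rw [Fin.sum_univ_eq_sum_range (fun k => (m - k).choose (i : ℕ) * k.choose (m - (j : ℕ)))]
  rw [aux_sumC m (m - (j : ℕ)) (i : ℕ)]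
  split_ifs with h
  · congr 1
    have h1 : (i : ℕ) + (m - (j : ℕ)) + 1 = (m + 1) - ((j : ℕ) - (i : ℕ)) := by omega
    rw [h1, Nat.choose_symm (by omega)]
  · rw [Nat.choose_eq_zero_of_lt (by omega)]
    simp
end

section
/- Let P = (p₀, p₁, …, p_h) be a maximal simple oriented path in a planar directed network N in a disk (no sources or sinks in the interior, boundary sources and sinks). If P is unequivocal (there is no oriented path (p_k, q₁, …, q_t, p_ℓ) in N with all q_s distinct from all p_r), then any other directed path R in N from a boundary vertex s to a boundary vertex t, with s, t both distinct from the endpoints of P, intersects P in at most one contiguous interval; moreover the first meeting vertex of R with P (along R) has two incoming and one outgoing edge, and the last common vertex has one incoming and two outgoing edges. -/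
open scoped unitInterval

/-- A planar directed network in a disk: a finite directed graph whose vertices are
embedded in the closed unit disk of the plane (univalent boundary vertices on the
bounding circle), with each directed edge realized by an injective curve in the disk,
curves of distinct edges meeting only at common endpoints and edge interiors avoiding
all vertices. -/
structure DiskNetwork (V : Type) [Fintype V] [DecidableEq V] where
  /-- the directed adjacency relation (edges) -/
  adj : V → V → Bool
  /-- the embedding of the vertices into the plane -/
  pos : V → EuclideanSpace ℝ (Fin 2)
  pos_mem : ∀ v, pos v ∈ Metric.closedBall (0 : EuclideanSpace ℝ (Fin 2)) 1
  pos_inj : Function.Injective pos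
  /-- each directed edge is realized by a curve in the disk -/
  edgePath : ∀ u v, adj u v = true → Path (pos u) (pos v)
  edge_in_disk : ∀ u v (h : adj u v = true) (t : I),
    edgePath u v h t ∈ Metric.closedBall (0 : EuclideanSpace ℝ (Fin 2)) 1
  edge_inj : ∀ u v (h : adj u v = true), Function.Injective (edgePath u v h)
  /-- curves of distinct edges meet only at common endpoints -/
  edges_disjoint : ∀ u v (h : adj u v = true) u' v' (h' : adj u' v' = true),
    (u, v) ≠ (u', v') → ∀ s t : I, s ≠ 0 → s ≠ 1 →
      edgePath u v h s ≠ edgePath u' v' h' t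
  /-- the interior of an edge avoids every vertex -/
  edge_interior_avoids_vertices : ∀ u v (h : adj u v = true) (t : I),
    t ≠ 0 → t ≠ 1 → ∀ w, edgePath u v h t ≠ pos w

namespace DiskNetwork

variable {V : Type} [Fintype V] [DecidableEq V] (N : DiskNetwork V)

/-- a boundary vertex is one lying on the bounding circle of the disk -/
def boundary (v : V) : Prop := ‖N.pos v‖ = 1

/-- number of incoming edges -/
def inDeg (v : V) : ℕ := (Finset.univ.filter fun u => N.adj u v = true).card

/-- number of outgoing edges -/
def outDeg (v : V) : ℕ := (Finset.univ.filter fun u => N.adj v u = true).card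

/-- a boundary source -/
def isSource (v : V) : Prop := N.boundary v ∧ N.inDeg v = 0 ∧ N.outDeg v = 1

/-- a boundary sink -/
def isSink (v : V) : Prop := N.boundary v ∧ N.inDeg v = 1 ∧ N.outDeg v = 0

/-- boundary vertices are univalent; every internal vertex is trivalent, either
'black' (two incoming, one outgoing) or 'white' (one incoming, two outgoing); in
particular there are no sources or sinks in the interior -/
def IsValid : Prop :=
  (∀ v, N.boundary v → N.inDeg v + N.outDeg v = 1) ∧
    ∀ v, ¬ N.boundary v →
      (N.inDeg v = 2 ∧ N.outDeg v = 1) ∨ (N.inDeg v = 1 ∧ N.outDeg v = 2)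

/-- a directed walk, as a nonempty list of consecutively adjacent vertices -/
def IsDirPath (L : List V) : Prop :=
  L ≠ [] ∧ L.Chain' fun u v => N.adj u v = true

/-- `P` is unequivocal: there is no oriented path `(p_k, q₁, …, q_t, p_ℓ)` with
`t ≥ 1` and all `q_s` distinct from all vertices of `P`. -/
def Unequivocal (P : List V) : Prop :=
  ¬ ∃ (a b : V) (M : List V), M ≠ [] ∧ a ∈ P ∧ b ∈ P ∧ (∀ x ∈ M, x ∉ P) ∧
      (a :: (M ++ [b])).Chain' fun u v => N.adj u v = true

end DiskNetwork

/-!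
Along `R`, the vertices lying on `P` form a single interval: if `R` left `P` and came back, the
stretch of `R` between the two visits would be a detour `p_k → q₁ → ⋯ → q_t → p_ℓ` avoiding `P`,
which unequivocality forbids. A boundary vertex is univalent, whereas every vertex of `P` other
than its ends has an edge in and an edge out, so `R` starts and ends off `P`. Hence `R` enters `P`
at its first common vertex `v` along an edge from outside `P`; as `v` is not the source of `P`, it
also has its predecessor on `P`, so it has two incoming edges and is black. Symmetrically, the last
common vertex has two outgoing edges and is white.
-/

namespace List

variable {α : Type*}

theorem exists_gap_infix_of_lt_of_lt {p : α → Prop} [DecidablePred p] {l : List α} {i j k : ℕ}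
    (hij : i < j) (hjk : j < k) (hkl : k < l.length) (hi : p l[i]) (hj : ¬ p l[j])
    (hk : p l[k]) :
    ∃ a M b, M ≠ [] ∧ p a ∧ p b ∧ (∀ x ∈ M, ¬ p x) ∧ a :: (M ++ [b]) <:+: l := by
  induction l generalizing i j k with
  | nil => simp at hkl
  | cons x l ih =>
    obtain _ | j := j
    · omega
    obtain _ | k := k
    · omega
    simp only [length_cons, getElem_cons_succ] at hkl hj hk
    obtain _ | i := i
    · by_cases h0 : p l[0]
      · obtain ⟨a, M, b, hM⟩ := ih (i := 0) (by grind) (by omega) (by omega) h0 hj hk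
        exact ⟨a, M, b, hM.1, hM.2.1, hM.2.2.1, hM.2.2.2.1, infix_cons hM.2.2.2.2⟩
      · -- the gap is the maximal run of non-`p` elements right after `x`
        have hdrop : l.dropWhile (fun y => ¬ p y) ≠ [] := by
          rw [Ne, dropWhile_eq_nil_iff]
          exact fun h => by simpa [hk] using h l[k] (getElem_mem _)
        refine ⟨x, l.takeWhile (fun y => ¬ p y), (l.dropWhile (fun y => ¬ p y)).head hdrop,
          ?_, hi, ?_, ?_, ?_⟩
        · simpa [takeWhile_eq_nil_iff] using ⟨by omega, h0⟩
        · simpa using head_dropWhile_not _ hdrop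
        · intro y hy
          simpa using mem_takeWhile_imp hy
        · refine IsPrefix.isInfix ((prefix_cons_inj x).2 ?_)
          conv_rhs => rw [← takeWhile_append_dropWhile (p := fun y => ¬ p y) (l := l),
            ← cons_head_tail hdrop]
          exact (prefix_append_right_inj _).2 ((prefix_cons_inj _).2 nil_prefix)
    · obtain ⟨a, M, b, hM⟩ := ih (i := i) (j := j) (k := k) (by omega) (by omega) (by omega)
        (by simpa using hi) hj hk
      exact ⟨a, M, b, hM.1, hM.2.1, hM.2.2.1, hM.2.2.2.1, infix_cons hM.2.2.2.2⟩

variable {r : α → α → Prop} {l : List α}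

theorem IsChain.exists_rel_of_ne_head (hl : l.IsChain r) (hne : l ≠ []) {v : α} (hv : v ∈ l)
    (hv' : v ≠ l.head hne) : ∃ u ∈ l, r u v := by
  obtain ⟨i, hi, rfl⟩ := getElem_of_mem hv
  obtain _ | i := i
  · exact absurd (head_eq_getElem hne).symm hv'
  · exact ⟨l[i], getElem_mem _, isChain_iff_getElem.1 hl i hi⟩

theorem IsChain.exists_rel_of_ne_getLast (hl : l.IsChain r) (hne : l ≠ []) {v : α} (hv : v ∈ l)
    (hv' : v ≠ l.getLast hne) : ∃ w ∈ l, r v w := by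
  obtain ⟨i, hi, rfl⟩ := getElem_of_mem hv
  have hi' : i + 1 < l.length := by
    by_contra h
    exact hv' (by simp only [getLast_eq_getElem]; congr 1; omega)
  exact ⟨l[i + 1], getElem_mem _, isChain_iff_getElem.1 hl i hi'⟩

theorem IsChain.exists_rel_of_forall_lt {p : α → Prop} (hl : l.IsChain r) (hne : l ≠ [])
    (hhead : ¬ p (l.head hne)) {i : Fin l.length} (hpi : p (l.get i))
    (hi : ∀ m < i, ¬ p (l.get m)) : ∃ u, ¬ p u ∧ r u (l.get i) := by
  obtain ⟨i, hil⟩ := i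
  obtain _ | k := i
  · exact absurd (by simpa [head_eq_getElem] using hpi) hhead
  · exact ⟨l[k], hi ⟨k, by omega⟩ (Fin.mk_lt_mk.2 k.lt_succ_self),
      isChain_iff_getElem.1 hl k hil⟩

theorem IsChain.exists_rel_of_forall_gt {p : α → Prop} (hl : l.IsChain r) (hne : l ≠ [])
    (hlast : ¬ p (l.getLast hne)) {j : Fin l.length} (hpj : p (l.get j))
    (hj : ∀ m > j, ¬ p (l.get m)) : ∃ w, ¬ p w ∧ r (l.get j) w := by
  obtain ⟨j, hjl⟩ := j
  have hj1 : j + 1 < l.length := by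
    by_contra h
    exact hlast (by simpa [getLast_eq_getElem, show j = l.length - 1 by omega] using hpj)
  exact ⟨l[j + 1], hj ⟨j + 1, hj1⟩ (Fin.mk_lt_mk.2 j.lt_succ_self),
    isChain_iff_getElem.1 hl j hj1⟩

end List

theorem Fin.exists_eq_Icc_of_ordConnected {n : ℕ} {s : Set (Fin n)} (hs : s.OrdConnected)
    (hne : s.Nonempty) : ∃ i j, s = Set.Icc i j := by
  have : NeZero n := ⟨hne.some.pos.ne'⟩
  exact ⟨_, _, hne.ordConnected_iff_of_bdd'.1 hs⟩

namespace DiskNetwork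

variable {V : Type} [Fintype V] [DecidableEq V] {N : DiskNetwork V} {u v w : V}

theorem one_le_inDeg_of_adj (h : N.adj u v = true) : 1 ≤ N.inDeg v :=
  Finset.card_pos.2 ⟨u, by simp [h]⟩

theorem one_le_outDeg_of_adj (h : N.adj v w = true) : 1 ≤ N.outDeg v :=
  Finset.card_pos.2 ⟨w, by simp [h]⟩

theorem two_le_inDeg_of_adj (hu : N.adj u v = true) (hw : N.adj w v = true) (huw : u ≠ w) :
    2 ≤ N.inDeg v :=
  Finset.one_lt_card.2 ⟨u, by simp [hu], w, by simp [hw], huw⟩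

theorem two_le_outDeg_of_adj (hu : N.adj v u = true) (hw : N.adj v w = true) (huw : u ≠ w) :
    2 ≤ N.outDeg v :=
  Finset.one_lt_card.2 ⟨u, by simp [hu], w, by simp [hw], huw⟩

namespace IsValid

theorem inDeg_eq_two_of_two_le (hN : N.IsValid) (h : 2 ≤ N.inDeg v) :
    N.inDeg v = 2 ∧ N.outDeg v = 1 := by
  by_cases hb : N.boundary v
  · have := hN.1 v hb
    omega
  · have := hN.2 v hb
    omega

theorem outDeg_eq_two_of_two_le (hN : N.IsValid) (h : 2 ≤ N.outDeg v) :
    N.inDeg v = 1 ∧ N.outDeg v = 2 := by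
  by_cases hb : N.boundary v
  · have := hN.1 v hb
    omega
  · have := hN.2 v hb
    omega

variable {P : List V}

theorem not_boundary_of_mem (hN : N.IsValid)
    (hP : P.IsChain fun u v => N.adj u v = true) (hPne : P ≠ [])
    (hv : v ∈ P) (hhead : v ≠ P.head hPne) (hlast : v ≠ P.getLast hPne) :
    ¬ N.boundary v := by
  intro hb
  obtain ⟨u, -, hu⟩ := hP.exists_rel_of_ne_head hPne hv hhead
  obtain ⟨w, -, hw⟩ := hP.exists_rel_of_ne_getLast hPne hv hlast
  have := hN.1 v hb
  have := one_le_inDeg_of_adj hu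
  have := one_le_outDeg_of_adj hw
  omega

theorem inDeg_eq_two_of_adj_of_not_mem (hN : N.IsValid)
    (hP : P.IsChain fun u v => N.adj u v = true) (hPne : P ≠ [])
    (hsrc : N.inDeg (P.head hPne) = 0) (hv : v ∈ P) (hu : u ∉ P)
    (huv : N.adj u v = true) : N.inDeg v = 2 ∧ N.outDeg v = 1 := by
  have hhead : v ≠ P.head hPne := by
    rintro rfl
    have := one_le_inDeg_of_adj huv
    omega
  obtain ⟨w, hw, hwv⟩ := hP.exists_rel_of_ne_head hPne hv hhead
  exact hN.inDeg_eq_two_of_two_le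
    (two_le_inDeg_of_adj huv hwv (ne_of_mem_of_not_mem hw hu).symm)

theorem outDeg_eq_two_of_adj_of_not_mem (hN : N.IsValid)
    (hP : P.IsChain fun u v => N.adj u v = true) (hPne : P ≠ [])
    (hsnk : N.outDeg (P.getLast hPne) = 0) (hv : v ∈ P) (hw : w ∉ P)
    (hvw : N.adj v w = true) : N.inDeg v = 1 ∧ N.outDeg v = 2 := by
  have hlast : v ≠ P.getLast hPne := by
    rintro rfl
    have := one_le_outDeg_of_adj hvw
    omega
  obtain ⟨u, hu, hvu⟩ := hP.exists_rel_of_ne_getLast hPne hv hlast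
  exact hN.outDeg_eq_two_of_two_le
    (two_le_outDeg_of_adj hvw hvu (ne_of_mem_of_not_mem hu hw).symm)

end IsValid

theorem Unequivocal.ordConnected_setOf_get_mem {P R : List V} (hP : N.Unequivocal P)
    (hR : R.IsChain fun u v => N.adj u v = true) :
    {m : Fin R.length | R.get m ∈ P}.OrdConnected := by
  refine ⟨fun k hk l hl m ⟨hkm, hml⟩ => ?_⟩
  by_contra hm
  have hkm' : k < m := lt_of_le_of_ne hkm fun h => hm (h ▸ hk)
  have hml' : m < l := lt_of_le_of_ne hml fun h => hm (h ▸ hl)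
  obtain ⟨a, M, b, hM, ha, hb, hMP, hinfix⟩ :=
    List.exists_gap_infix_of_lt_of_lt (p := (· ∈ P)) hkm' hml' l.isLt hk hm hl
  exact hP ⟨a, b, M, hM, ha, hb, hMP, hR.infix hinfix⟩

end DiskNetwork

theorem stmt19_general {V : Type} [Fintype V] [DecidableEq V] (N : DiskNetwork V)
    (hvalid : N.IsValid)
    (P : List V) (hP : N.IsDirPath P)
    (hPsrc : ∀ h : P ≠ [], N.isSource (P.head h))
    (hPsnk : ∀ h : P ≠ [], N.isSink (P.getLast h))
    (hPuneq : N.Unequivocal P)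
    (R : List V) (hR : N.IsDirPath R)
    (hRsrc : ∀ h : R ≠ [], N.boundary (R.head h) ∧
      ∀ hp : P ≠ [], R.head h ≠ P.head hp ∧ R.head h ≠ P.getLast hp)
    (hRsnk : ∀ h : R ≠ [], N.boundary (R.getLast h) ∧
      ∀ hp : P ≠ [], R.getLast h ≠ P.head hp ∧ R.getLast h ≠ P.getLast hp) :
    (∀ x ∈ R, x ∉ P) ∨
      ∃ i j : Fin R.length, i ≤ j ∧
        (∀ m : Fin R.length, R.get m ∈ P ↔ i ≤ m ∧ m ≤ j) ∧
        (N.inDeg (R.get i) = 2 ∧ N.outDeg (R.get i) = 1) ∧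
        (N.inDeg (R.get j) = 1 ∧ N.outDeg (R.get j) = 2) := by
  refine or_iff_not_imp_left.2 fun hmeet => ?_
  push Not at hmeet
  obtain ⟨x, hxR, hxP⟩ := hmeet
  obtain ⟨hRne, hRch⟩ := hR
  have hPne : P ≠ [] := List.ne_nil_of_mem hxP
  have hheadR : R.head hRne ∉ P := fun h =>
    hvalid.not_boundary_of_mem hP.2 hPne h ((hRsrc hRne).2 hPne).1 ((hRsrc hRne).2 hPne).2
      (hRsrc hRne).1
  have hlastR : R.getLast hRne ∉ P := fun h =>
    hvalid.not_boundary_of_mem hP.2 hPne h ((hRsnk hRne).2 hPne).1 ((hRsnk hRne).2 hPne).2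
      (hRsnk hRne).1
  obtain ⟨m, hm, rfl⟩ := List.getElem_of_mem hxR
  obtain ⟨i, j, hIcc⟩ := Fin.exists_eq_Icc_of_ordConnected
    (hPuneq.ordConnected_setOf_get_mem hRch) ⟨⟨m, hm⟩, hxP⟩
  have hiff (m : Fin R.length) : R.get m ∈ P ↔ i ≤ m ∧ m ≤ j := Set.ext_iff.1 hIcc m
  have hij : i ≤ j := ((hiff ⟨m, hm⟩).1 hxP).elim le_trans
  have hiP : R.get i ∈ P := (hiff i).2 ⟨le_rfl, hij⟩
  have hjP : R.get j ∈ P := (hiff j).2 ⟨hij, le_rfl⟩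
  refine ⟨i, j, hij, hiff, ?_, ?_⟩
  · obtain ⟨u, hu, hui⟩ := hRch.exists_rel_of_forall_lt (p := (· ∈ P)) hRne hheadR hiP
      fun m hm h => hm.not_ge ((hiff m).1 h).1
    exact hvalid.inDeg_eq_two_of_adj_of_not_mem hP.2 hPne (hPsrc hPne).2.1 hiP hu hui
  · obtain ⟨w, hw, hjw⟩ := hRch.exists_rel_of_forall_gt (p := (· ∈ P)) hRne hlastR hjP
      fun m hm h => hm.not_ge ((hiff m).1 h).2
    exact hvalid.outDeg_eq_two_of_adj_of_not_mem hP.2 hPne (hPsnk hPne).2.2 hjP hw hjw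

/-- let `P` be a maximal simple oriented path in a planar directed
network `N` in a disk.  If `P` is unequivocal, then any other directed path `R` in `N`
from a boundary vertex `s` to a boundary vertex `t`, with `s`, `t` both distinct from
the endpoints of `P`, intersects `P` in at most one contiguous interval; moreover the
first meeting vertex of `R` with `P` (along `R`) has two incoming and one outgoing
edge, and the last common vertex has one incoming and two outgoing edges. -/
theorem stmt19 {V : Type} [Fintype V] [DecidableEq V] (N : DiskNetwork V)
    (hvalid : N.IsValid)
    (P : List V) (hP : N.IsDirPath P) (hPnd : P.Nodup)
    (hPsrc : ∀ h : P ≠ [], N.isSource (P.head h))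
    (hPsnk : ∀ h : P ≠ [], N.isSink (P.getLast h))
    (hPuneq : N.Unequivocal P)
    (R : List V) (hR : N.IsDirPath R) (hRnd : R.Nodup)
    (hRsrc : ∀ h : R ≠ [], N.boundary (R.head h) ∧
      ∀ hp : P ≠ [], R.head h ≠ P.head hp ∧ R.head h ≠ P.getLast hp)
    (hRsnk : ∀ h : R ≠ [], N.boundary (R.getLast h) ∧
      ∀ hp : P ≠ [], R.getLast h ≠ P.head hp ∧ R.getLast h ≠ P.getLast hp) :
    (∀ x ∈ R, x ∉ P) ∨
      ∃ i j : Fin R.length, i ≤ j ∧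
        (∀ m : Fin R.length, R.get m ∈ P ↔ i ≤ m ∧ m ≤ j) ∧
        (N.inDeg (R.get i) = 2 ∧ N.outDeg (R.get i) = 1) ∧
        (N.inDeg (R.get j) = 1 ∧ N.outDeg (R.get j) = 2) :=
  stmt19_general N hvalid P hP hPsrc hPsnk hPuneq R hR hRsrc hRsnk
end
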